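/- Let A be a commutative ring that is finitely generated as a ℤ-algebra and let m be a maximal ideal of A. Then the residue field A/m is a finite field. -/

import Mathlib

/-!
The Jacobson radical of ℤ is zero and every nonzero prime of ℤ is maximal, so ℤ is a Jacobson
ring, and Zariski's lemma makes the residue field `K = A ⧸ m` a finitely generated ℤ-module.
Then `K` is integral over ℤ, so `ℤ → K` cannot be injective (ℤ would be a field); its image is
therefore a finite quotient of ℤ, and `K` is a finite module over that finite ring.
-/

theorem isJacobsonRing_of_jacobson_bot_eq_bot {R : Type*} [CommRing R] [IsDomain R]
    [Ring.DimensionLEOne R] (h : (⊥ : Ideal R).jacobson = ⊥) : IsJacobsonRing R := by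
  rw [isJacobsonRing_iff_prime_eq]
  intro P hP
  rcases eq_or_ne P ⊥ with rfl | hP_ne
  · exact h
  · have := Ring.DimensionLEOne.maximalOfPrime hP_ne hP
    exact Ideal.jacobson_eq_self_of_isMaximal

theorem Int.jacobson_bot : (⊥ : Ideal ℤ).jacobson = ⊥ := by
  refine eq_bot_iff.mpr fun x hx ↦ ?_
  rw [Ideal.mem_jacobson_bot] at hx
  have h₁ := Int.isUnit_iff.mp (hx 1)
  have h₂ := Int.isUnit_iff.mp (hx (-1))
  rw [Ideal.mem_bot]
  omega

instance Int.isJacobsonRing : IsJacobsonRing ℤ :=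
  isJacobsonRing_of_jacobson_bot_eq_bot Int.jacobson_bot

theorem finite_of_moduleFinite_of_hasFiniteQuotients {R K : Type*} [CommRing R]
    [Ring.HasFiniteQuotients R] [Field K] [Algebra R K] [Module.Finite R K] (hR : ¬IsField R) :
    Finite K := by
  have hker : RingHom.ker (algebraMap R K) ≠ ⊥ := fun h ↦
    hR <| isField_of_isIntegral_of_isField ((RingHom.injective_iff_ker_eq_bot _).mpr h)
      (Field.toIsField K)
  have := Ring.HasFiniteQuotients.finiteQuotient hker
  have : Finite (⊥ : Subalgebra R K) := by
    refine Set.Finite.to_subtype <| (Set.finite_range (RingHom.kerLift (algebraMap R K))).subset ?_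
    rintro _ ⟨r, rfl⟩
    exact ⟨Ideal.Quotient.mk _ r, RingHom.kerLift_mk _ r⟩
  have : Module.Finite (⊥ : Subalgebra R K) K := Module.Finite.of_restrictScalars_finite R _ K
  exact Module.finite_of_finite (⊥ : Subalgebra R K)

theorem finite_quotient_of_isJacobsonRing_of_hasFiniteQuotients (R : Type*) {A : Type*}
    [CommRing R] [IsJacobsonRing R] [Ring.HasFiniteQuotients R] (hR : ¬IsField R)
    [CommRing A] [Algebra R A] [Algebra.FiniteType R A] (m : Ideal A) [m.IsMaximal] :
    Finite (A ⧸ m) := by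
  let := Ideal.Quotient.field m
  have := finite_of_finite_type_of_isJacobsonRing R (A ⧸ m)
  exact finite_of_moduleFinite_of_hasFiniteQuotients hR

/-- Nullstellensatz over ℤ: residue fields of maximal ideals of finitely
generated ℤ-algebras are finite. -/
theorem stmt_3 (A : Type*) [CommRing A] [Algebra ℤ A]
    (hfg : Algebra.FiniteType ℤ A) (m : Ideal A) (hm : m.IsMaximal) :
    Finite (A ⧸ m) :=
  finite_quotient_of_isJacobsonRing_of_hasFiniteQuotients ℤ Int.not_isField m
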